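/- Let d ≥ 1 and let W : ℝ^d → ℝ ∪ {+∞} be measurable, bounded below by a finite constant, and suppose ρ ∈ P(ℝ^d) is a probability measure with ρ(B(0,n)) > 0 for all n large enough. Define the truncated probability measures ρ_n := ρ(B(0,n))^{-1} · χ_{B(0,n)} ρ. Then E(ρ_n) → E(ρ) as n → ∞, where E is the interaction energy. -/

import Mathlib

open MeasureTheory Filter Metric
open scoped ENNReal

/-- `ℝ^d` with the Euclidean structure. -/
abbrev Ed (d : ℕ) : Type := EuclideanSpace ℝ (Fin d)

/-- The positive part of an extended real number, as an element of `ℝ≥0∞`. -/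
noncomputable def EReal.posPart (x : EReal) : ℝ≥0∞ := (x ⊔ 0).abs

/-- The integral of an `EReal`-valued function, defined as the difference (in `EReal`)
of the lower integrals of the positive and the negative parts. -/
noncomputable def eInt {α : Type*} [MeasurableSpace α] (μ : Measure α) (f : α → EReal) :
    EReal :=
  ((∫⁻ x, (f x).posPart ∂μ : ℝ≥0∞) : EReal) - ((∫⁻ x, (-f x).posPart ∂μ : ℝ≥0∞) : EReal)

/-- The interaction energy `E(ρ) = (1/2) ∬ W(x-y) dρ(x) dρ(y)`, with values in `EReal`. -/
noncomputable def energy {d : ℕ} (W : Ed d → EReal) (ρ : Measure (Ed d)) : EReal :=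
  ((1 / 2 : ℝ) : EReal) * eInt (ρ.prod ρ) (fun p => W (p.1 - p.2))

/-- The support of a measure: the set of points all of whose open neighbourhoods have
positive measure. -/
def msupport {α : Type*} [TopologicalSpace α] [MeasurableSpace α] (μ : Measure α) : Set α :=
  {x | ∀ U : Set α, IsOpen U → x ∈ U → 0 < μ U}

/-- `ρ ∈ P_R(ℝ^d)`: the support of `ρ` is contained in the closed ball `B̄(0,R)`. -/
def InBall {d : ℕ} (ρ : Measure (Ed d)) (R : ℝ) : Prop :=
  msupport ρ ⊆ Metric.closedBall (0 : Ed d) R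

/-- `ρ` is a global minimiser of the interaction energy on `P(ℝ^d)`. -/
def IsMinimiser {d : ℕ} (W : Ed d → EReal) (ρ : Measure (Ed d)) : Prop :=
  IsProbabilityMeasure ρ ∧
    ∀ μ : Measure (Ed d), IsProbabilityMeasure μ → energy W ρ ≤ energy W μ

/-- `ρ` is a global minimiser of the interaction energy on `P_R(ℝ^d)`. -/
def IsMinimiserOn {d : ℕ} (W : Ed d → EReal) (ρ : Measure (Ed d)) (R : ℝ) : Prop :=
  IsProbabilityMeasure ρ ∧ InBall ρ R ∧
    ∀ μ : Measure (Ed d), IsProbabilityMeasure μ → InBall μ R → energy W ρ ≤ energy W μ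

/-!
Writing `B_n = B(0,n)` and `a_n = ρ(B_n)`, the product of `ρ_n` with itself is
`a_n⁻² · χ_{B_n × B_n} (ρ ⊗ ρ)`, so the positive and negative parts of the energy of `ρ_n`
are `a_n⁻²` times the lower integrals of `W(x-y)^±` over the increasing squares `B_n × B_n`.
These converge to the full lower integrals (no measurability is needed for lower integrals
over an increasing union), and `a_n → 1`. The negative part of `W` is bounded by `c⁻`, so its
integral is finite and the difference of the two limits is the limit of the differences.
-/

open Set
open scoped Topology

namespace EReal

lemma posPart_coe (r : ℝ) : EReal.posPart r = ENNReal.ofReal r := by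
  rcases le_total r 0 with h | h
  · rw [EReal.posPart, sup_eq_right.2 (by exact_mod_cast h), abs_zero,
      ENNReal.ofReal_of_nonpos h]
  · rw [EReal.posPart, sup_eq_left.2 (by exact_mod_cast h), abs_def, abs_of_nonneg h]

lemma posPart_le_ofReal {x : EReal} {r : ℝ} (h : x ≤ r) : x.posPart ≤ ENNReal.ofReal r := by
  induction x with
  | bot => simp [EReal.posPart]
  | top => simp at h
  | coe x => exact posPart_coe x ▸ ENNReal.ofReal_le_ofReal (EReal.coe_le_coe_iff.1 h)

lemma tendsto_coe_ennreal_sub {ι : Type*} {l : Filter ι} {u v : ι → ℝ≥0∞} {a b : ℝ≥0∞}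
    (hu : Tendsto u l (𝓝 a)) (hv : Tendsto v l (𝓝 b)) (hb : b ≠ ∞) :
    Tendsto (fun i => (u i : EReal) - v i) l (𝓝 ((a : EReal) - b)) := by
  have hb' : -(b : EReal) ≠ ⊥ := by simpa [EReal.neg_eq_bot_iff] using hb
  exact (continuousAt_add (Or.inr hb') (Or.inl (coe_ennreal_ne_bot a))).tendsto.comp
    ((tendsto_coe_ennreal.2 hu).prodMk_nhds (tendsto_coe_ennreal.2 hv).neg)

end EReal

section LowerIntegral

variable {α : Type*} [MeasurableSpace α] {μ : Measure α}

lemma tendsto_setLIntegral_of_monotone (f : α → ℝ≥0∞) {S : ℕ → Set α} (hS : Monotone S) :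
    Tendsto (fun n => ∫⁻ x in S n, f x ∂μ) atTop (𝓝 (∫⁻ x in ⋃ n, S n, f x ∂μ)) := by
  rw [setLIntegral_iUnion_of_directed f hS.directed_le]
  exact tendsto_atTop_iSup fun m n hmn => lintegral_mono_set (hS hmn)

lemma lintegral_posPart_neg_ne_top [IsFiniteMeasure μ] {f : α → EReal} {c : ℝ}
    (hf : ∀ x, (c : EReal) ≤ f x) : ∫⁻ x, (-f x).posPart ∂μ ≠ ∞ := by
  refine ne_top_of_le_ne_top (lintegral_const_lt_top (ENNReal.ofReal_ne_top (r := -c))).ne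
    (lintegral_mono fun x => EReal.posPart_le_ofReal ?_)
  rw [EReal.coe_neg]
  exact EReal.neg_le_neg_iff.2 (hf x)

lemma eInt_smul_measure (c : ℝ≥0∞) (f : α → EReal) :
    eInt (c • μ) f = ((c * ∫⁻ x, (f x).posPart ∂μ : ℝ≥0∞) : EReal) -
      ((c * ∫⁻ x, (-f x).posPart ∂μ : ℝ≥0∞) : EReal) := by
  rw [eInt, lintegral_smul_measure, lintegral_smul_measure, smul_eq_mul, smul_eq_mul]

lemma tendsto_eInt_smul_restrict {f : α → EReal} (hf : ∫⁻ x, (-f x).posPart ∂μ ≠ ∞)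
    {m : ℕ → ℝ≥0∞} (hm : Tendsto m atTop (𝓝 1)) {S : ℕ → Set α} (hS : Monotone S)
    (hSU : ⋃ n, S n = univ) :
    Tendsto (fun n => eInt (m n • μ.restrict (S n)) f) atTop (𝓝 (eInt μ f)) := by
  have hlim (g : α → ℝ≥0∞) :
      Tendsto (fun n => m n * ∫⁻ x in S n, g x ∂μ) atTop (𝓝 (∫⁻ x, g x ∂μ)) := by
    have hg := tendsto_setLIntegral_of_monotone (μ := μ) g hS
    rw [hSU, Measure.restrict_univ] at hg
    simpa using ENNReal.Tendsto.mul hm (Or.inl one_ne_zero) hg (Or.inr ENNReal.one_ne_top)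
  simp_rw [eInt_smul_measure]
  exact EReal.tendsto_coe_ennreal_sub (hlim _) (hlim _) hf

end LowerIntegral

lemma monotone_ball_nat {X : Type*} [PseudoMetricSpace X] (x : X) :
    Monotone fun n : ℕ => ball x n :=
  fun _ _ hmn => ball_subset_ball (by exact_mod_cast hmn)

lemma tendsto_measure_ball_nat {X : Type*} [PseudoMetricSpace X] [MeasurableSpace X]
    (μ : Measure X) (x : X) : Tendsto (fun n : ℕ => μ (ball x n)) atTop (𝓝 (μ univ)) := by
  rw [← iUnion_ball_nat x]
  exact tendsto_measure_iUnion_atTop (monotone_ball_nat x)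

lemma energy_smul_restrict {d : ℕ} (W : Ed d → EReal) (ρ : Measure (Ed d)) [SFinite ρ]
    (a : ℝ≥0∞) (B : Set (Ed d)) :
    energy W (a • ρ.restrict B) =
      ((1 / 2 : ℝ) : EReal) *
        eInt ((a * a) • (ρ.prod ρ).restrict (B ×ˢ B)) (fun p => W (p.1 - p.2)) := by
  rw [energy, Measure.prod_smul_left, Measure.prod_smul_right, smul_smul, Measure.prod_restrict]

theorem energy_truncation_tendsto_general
    {d : ℕ} (W : Ed d → EReal)
    (c : ℝ) (hbound : ∀ x, (c : EReal) ≤ W x)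
    (ρ : Measure (Ed d)) (hρ : IsProbabilityMeasure ρ) :
    Tendsto
      (fun n : ℕ => energy W
        ((ρ (Metric.ball (0 : Ed d) (n : ℝ)))⁻¹ •
          ρ.restrict (Metric.ball (0 : Ed d) (n : ℝ))))
      atTop (nhds (energy W ρ)) := by
  have hball : Tendsto (fun n : ℕ => ρ (ball (0 : Ed d) n)) atTop (𝓝 1) := by
    simpa using tendsto_measure_ball_nat ρ (0 : Ed d)
  have hinv : Tendsto (fun n : ℕ => (ρ (ball (0 : Ed d) n))⁻¹) atTop (𝓝 1) := by
    simpa using tendsto_inv_iff.2 hball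
  have hscale : Tendsto (fun n : ℕ => (ρ (ball (0 : Ed d) n))⁻¹ * (ρ (ball (0 : Ed d) n))⁻¹)
      atTop (𝓝 1) := by
    simpa using ENNReal.Tendsto.mul hinv (Or.inl one_ne_zero) hinv (Or.inr ENNReal.one_ne_top)
  have hmono := monotone_ball_nat (0 : Ed d)
  have hsquares : ⋃ n : ℕ, ball (0 : Ed d) n ×ˢ ball (0 : Ed d) n = univ := by
    rw [iUnion_prod_of_monotone hmono hmono, iUnion_ball_nat, univ_prod_univ]
  have hneg := lintegral_posPart_neg_ne_top (μ := ρ.prod ρ) (f := fun p => W (p.1 - p.2))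
    fun p => hbound _
  simp_rw [energy_smul_restrict]
  exact EReal.Tendsto.const_mul
    (tendsto_eInt_smul_restrict hneg hscale (fun m n hmn => prod_mono (hmono hmn) (hmono hmn))
      hsquares) (Or.inl (EReal.coe_ne_bot _)) (Or.inl (EReal.coe_ne_top _))

/-- **Lemma (energies of truncations converge).** If `W` is measurable and bounded below by
a finite constant and `ρ` is a probability measure with `ρ(B(0,n)) > 0` for all large `n`,
then the energies of the truncated (renormalised) measures
`ρ_n = ρ(B(0,n))⁻¹ · χ_{B(0,n)} ρ` converge to the energy of `ρ`. -/
theorem energy_truncation_tendsto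
    {d : ℕ} (hd : 1 ≤ d) (W : Ed d → EReal) (hWmeas : Measurable W)
    (c : ℝ) (hbound : ∀ x, (c : EReal) ≤ W x)
    (ρ : Measure (Ed d)) (hρ : IsProbabilityMeasure ρ)
    (hpos : ∀ᶠ n : ℕ in atTop, 0 < ρ (Metric.ball (0 : Ed d) (n : ℝ))) :
    Tendsto
      (fun n : ℕ => energy W
        ((ρ (Metric.ball (0 : Ed d) (n : ℝ)))⁻¹ •
          ρ.restrict (Metric.ball (0 : Ed d) (n : ℝ))))
      atTop (nhds (energy W ρ)) :=
  energy_truncation_tendsto_general W c hbound ρ hρ
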